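/- Let K be a field of characteristic not 2 and let u₁, u₂, u₃ be independent transcendentals over K. Let σ be the K-automorphism of K(u₁,u₂,u₃) with σ(u₁) = −u₁, σ(u₂) = (3u₁² + 1)/u₂, σ(u₃) = ε·u₃ where ε ∈ {±1}. Then K(u₁,u₂,u₃)^⟨σ⟩ = K(q₁, q₂, q₃), where q₁ = (3u₁² + u₂² + 1)/u₂, q₂ = −(3u₁² − u₂² + 1)/(u₁u₂), and q₃ = u₃ if ε = 1, while q₃ = u₃/u₁ if ε = −1. -/

import Mathlib

open MvPolynomial IntermediateField Module

/-!
The automorphism σ squares to the identity on the generators u₁, u₂, u₃ and moves u₁, so it has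
order 2 and [F : F^σ] = 2 by Artin's theorem. The three invariants are σ-fixed:
q₁ = u₂ + σ u₂, q₂ = (u₂ - σ u₂) / u₁, and q₃ is u₃ or u₃ / u₁ according as σ fixes or negates u₃.
Over E = K(q₁, q₂, q₃) the single element u₁ generates everything, since u₂ = (q₁ + u₁ q₂) / 2 and
u₃ is q₃ or q₃ u₁; and u₁ is quadratic over E, because u₁² (q₂² + 12) = q₁² - 4. Hence
[F : E] ≤ 2 = [F : F^σ], and E ≤ F^σ forces E = F^σ.
-/

section Quadratic

variable {E F : Type*} [Field E] [Field F] [Algebra E F] {x : F}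

theorem finiteDimensional_of_adjoin_simple_eq_top (hx : IsIntegral E x) (htop : E⟮x⟯ = ⊤) :
    FiniteDimensional E F := by
  have := adjoin.finiteDimensional hx
  rw [htop] at this
  exact (topEquiv (F := E) (E := F)).toLinearEquiv.finiteDimensional

theorem finrank_le_two_of_sq_eq (c : E) (hx : x ^ 2 = algebraMap E F c) (htop : E⟮x⟯ = ⊤) :
    finrank E F ≤ 2 := by
  have hroot : Polynomial.aeval x (Polynomial.X ^ 2 - Polynomial.C c) = 0 := by simp [hx]
  have hint : IsIntegral E x := ⟨_, Polynomial.monic_X_pow_sub_C c two_ne_zero, hroot⟩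
  rw [← finrank_top', ← htop, adjoin.finrank hint]
  have := minpoly.degree_le_of_ne_zero E x (Polynomial.X_pow_sub_C_ne_zero two_pos c) hroot
  rw [Polynomial.degree_X_pow_sub_C two_pos] at this
  exact Polynomial.natDegree_le_iff_degree_le.2 this

end Quadratic

section FixedField

variable {K F : Type*} [Field K] [Field F] [Algebra K F]

theorem mem_fixedField_zpowers_iff (τ : F ≃ₐ[K] F) (x : F) :
    x ∈ fixedField (Subgroup.zpowers τ) ↔ τ x = x := by
  rw [mem_fixedField_iff]
  exact Subgroup.zpowers_le (H := MulAction.stabilizer (F ≃ₐ[K] F) x)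

theorem eq_one_of_fixedField_zpowers_eq_top {τ : F ≃ₐ[K] F}
    (h : fixedField (Subgroup.zpowers τ) = ⊤) : τ = 1 :=
  AlgEquiv.ext fun x ↦ (mem_fixedField_zpowers_iff τ x).1 (h ▸ mem_top)

theorem orderOf_eq_two_of_apply_eq_neg {σ : F ≃ₐ[K] F} (hσσ : σ * σ = 1) (h2 : (2 : F) ≠ 0)
    {x : F} (hx : x ≠ 0) (hσx : σ x = -x) : orderOf σ = 2 := by
  refine orderOf_eq_prime (by rwa [sq]) ?_
  rintro rfl
  rw [AlgEquiv.one_apply] at hσx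
  have : (2 : F) * x = 0 := by linear_combination hσx
  exact hx ((mul_eq_zero.1 this).resolve_left h2)

theorem fixedField_zpowers_eq_of_le_of_finrank_le {σ : F ≃ₐ[K] F} (hσ : IsOfFinOrder σ)
    {E : IntermediateField K F} [FiniteDimensional E F] (hE : E ≤ fixedField (Subgroup.zpowers σ))
    (hrank : finrank E F ≤ orderOf σ) : fixedField (Subgroup.zpowers σ) = E := by
  have : Finite (Subgroup.zpowers σ) := hσ.finite_zpowers
  have := Fintype.ofFinite (Subgroup.zpowers σ)
  have hfix : finrank (fixedField (Subgroup.zpowers σ)) F = Fintype.card (Subgroup.zpowers σ) :=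
    FixedPoints.finrank_eq_card _ F
  refine (eq_of_le_of_finrank_le' hE ?_).symm
  rwa [hfix, ← Nat.card_eq_fintype_card, Nat.card_zpowers]

theorem fixedField_zpowers_eq_of_sq_mem {σ : F ≃ₐ[K] F} (hσ : orderOf σ = 2)
    {E : IntermediateField K F} (hE : E ≤ fixedField (Subgroup.zpowers σ)) {x : F}
    (hx : x ^ 2 ∈ E) (htop : E⟮x⟯ = ⊤) : fixedField (Subgroup.zpowers σ) = E := by
  have hint : IsIntegral E x := .of_pow two_pos (isIntegral_algebraMap (x := (⟨x ^ 2, hx⟩ : E)))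
  have := finiteDimensional_of_adjoin_simple_eq_top hint htop
  refine fixedField_zpowers_eq_of_le_of_finrank_le (orderOf_pos_iff.1 (hσ ▸ two_pos)) hE ?_
  exact hσ ▸ finrank_le_two_of_sq_eq ⟨x ^ 2, hx⟩ rfl htop

end FixedField

section RationalFunctionField

variable {ι K F : Type*} [Field K] [Field F] [Algebra (MvPolynomial ι K) F]
  [IsFractionRing (MvPolynomial ι K) F]

theorem algebraMap_ne_zero_of_eval_ne_zero {p : MvPolynomial ι K} (v : ι → K)
    (hp : eval v p ≠ 0) : algebraMap (MvPolynomial ι K) F p ≠ 0 :=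
  (map_ne_zero_iff _ (IsFractionRing.injective _ F)).2 fun h ↦ hp (by rw [h, map_zero])

theorem algebraMap_X_ne_zero (i : ι) : algebraMap (MvPolynomial ι K) F (X i) ≠ 0 :=
  algebraMap_ne_zero_of_eval_ne_zero 1 (by simp)

theorem IntermediateField.eq_top_of_algebraMap_X_mem [Algebra K F]
    [IsScalarTower K (MvPolynomial ι K) F] (L : IntermediateField K F)
    (hX : ∀ i, algebraMap (MvPolynomial ι K) F (X i) ∈ L) : L = ⊤ := by
  have hpoly (p : MvPolynomial ι K) : algebraMap (MvPolynomial ι K) F p ∈ L := by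
    induction p using MvPolynomial.induction_on with
    | C a => rw [← algebraMap_eq, ← IsScalarTower.algebraMap_apply]; exact L.algebraMap_mem a
    | add p q hp hq => rw [map_add]; exact add_mem hp hq
    | mul_X p i hp => rw [map_mul]; exact mul_mem hp (hX i)
  refine eq_top_iff.2 fun x _ ↦ ?_
  obtain ⟨p, q, -, rfl⟩ := IsFractionRing.div_surjective (A := MvPolynomial ι K) x
  exact div_mem (hpoly p) (hpoly q)

end RationalFunctionField

namespace Invariants

variable {K F : Type*} [Field K] [Field F]

def q₁ (u₁ u₂ : F) : F := (3 * u₁ ^ 2 + u₂ ^ 2 + 1) / u₂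

def q₂ (u₁ u₂ : F) : F := -((3 * u₁ ^ 2 - u₂ ^ 2 + 1) / (u₁ * u₂))

open Classical in
noncomputable def q₃ (ε : K) (u₁ u₃ : F) : F := if ε = 1 then u₃ else u₃ / u₁

variable {u₁ u₂ u₃ : F}

theorem eq_q₁_add_mul_q₂_div_two (h2 : (2 : F) ≠ 0) (hu₁ : u₁ ≠ 0) (hu₂ : u₂ ≠ 0) :
    u₂ = (q₁ u₁ u₂ + u₁ * q₂ u₁ u₂) / 2 := by
  unfold q₁ q₂
  field_simp
  ring

theorem sq_mul_q₂_sq_add_twelve (hu₁ : u₁ ≠ 0) (hu₂ : u₂ ≠ 0) :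
    u₁ ^ 2 * (q₂ u₁ u₂ ^ 2 + 12) = q₁ u₁ u₂ ^ 2 - 4 := by
  unfold q₁ q₂
  field_simp
  ring

theorem q₂_sq_add_twelve_eq (hu₁ : u₁ ≠ 0) (hu₂ : u₂ ≠ 0) :
    q₂ u₁ u₂ ^ 2 + 12 = ((3 * u₁ ^ 2 - u₂ ^ 2 + 1) ^ 2 + 12 * (u₁ * u₂) ^ 2) / (u₁ * u₂) ^ 2 := by
  unfold q₂
  field_simp

theorem q₂_sq_add_twelve_ne_zero_of_isFractionRing {ι : Type*} [Algebra (MvPolynomial ι K) F]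
    [IsFractionRing (MvPolynomial ι K) F] (i j : ι) :
    q₂ (algebraMap (MvPolynomial ι K) F (X i)) (algebraMap (MvPolynomial ι K) F (X j)) ^ 2 + 12
      ≠ 0 := by
  have hnum := algebraMap_ne_zero_of_eval_ne_zero (F := F) 0
    (p := ((3 * X i ^ 2 - X j ^ 2 + 1) ^ 2 + 12 * (X i * X j) ^ 2 : MvPolynomial ι K)) (by simp)
  simp only [map_add, map_sub, map_mul, map_pow, map_one, map_ofNat] at hnum
  have hi := algebraMap_X_ne_zero (F := F) (K := K) i
  have hj := algebraMap_X_ne_zero (F := F) (K := K) j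
  rw [q₂_sq_add_twelve_eq hi hj]
  exact div_ne_zero hnum (pow_ne_zero 2 (mul_ne_zero hi hj))

variable [Algebra K F]

theorem mem_of_q₁_q₂_mem (h2 : (2 : F) ≠ 0) (hu₁ : u₁ ≠ 0) (hu₂ : u₂ ≠ 0)
    {L : IntermediateField K F} (hu₁L : u₁ ∈ L) (hq₁ : q₁ u₁ u₂ ∈ L) (hq₂ : q₂ u₁ u₂ ∈ L) :
    u₂ ∈ L := by
  rw [eq_q₁_add_mul_q₂_div_two h2 hu₁ hu₂]
  exact div_mem (add_mem hq₁ (mul_mem hu₁L hq₂)) (ofNat_mem L 2)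

theorem sq_mem_of_q₁_q₂_mem (hu₁ : u₁ ≠ 0) (hu₂ : u₂ ≠ 0) (hq₂12 : q₂ u₁ u₂ ^ 2 + 12 ≠ 0)
    {L : IntermediateField K F} (hq₁ : q₁ u₁ u₂ ∈ L) (hq₂ : q₂ u₁ u₂ ∈ L) : u₁ ^ 2 ∈ L := by
  rw [eq_div_of_mul_eq hq₂12 (sq_mul_q₂_sq_add_twelve hu₁ hu₂)]
  exact div_mem (sub_mem (pow_mem hq₁ 2) (ofNat_mem L 4)) (add_mem (pow_mem hq₂ 2) (ofNat_mem L 12))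

theorem mem_of_q₃_mem {ε : K} {L : IntermediateField K F} (hu₁ : u₁ ≠ 0) (hu₁L : u₁ ∈ L)
    (hq₃ : q₃ ε u₁ u₃ ∈ L) : u₃ ∈ L := by
  unfold q₃ at hq₃
  split_ifs at hq₃
  · exact hq₃
  · simpa [hu₁] using mul_mem hq₃ hu₁L

theorem adjoin_simple_u₁_eq_top (h2 : (2 : F) ≠ 0) (hu₁ : u₁ ≠ 0) (hu₂ : u₂ ≠ 0)
    (hgen : ∀ L : IntermediateField K F, u₁ ∈ L → u₂ ∈ L → u₃ ∈ L → L = ⊤) {ε : K}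
    {E : IntermediateField K F} (hq₁ : q₁ u₁ u₂ ∈ E) (hq₂ : q₂ u₁ u₂ ∈ E)
    (hq₃ : q₃ ε u₁ u₃ ∈ E) : E⟮u₁⟯ = ⊤ := by
  have hE : ∀ y ∈ E, y ∈ (E⟮u₁⟯).restrictScalars K := fun y hy ↦ (E⟮u₁⟯).algebraMap_mem ⟨y, hy⟩
  have hu₁L : u₁ ∈ (E⟮u₁⟯).restrictScalars K := mem_adjoin_simple_self E u₁
  refine restrictScalars_eq_top_iff.1 (hgen _ hu₁L ?_ (mem_of_q₃_mem hu₁ hu₁L (hE _ hq₃)))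
  exact mem_of_q₁_q₂_mem h2 hu₁ hu₂ hu₁L (hE _ hq₁) (hE _ hq₂)

variable {σ : F ≃ₐ[K] F}

theorem three_mul_sq_add_one_ne_zero (hσ₂ : σ u₂ = (3 * u₁ ^ 2 + 1) / u₂) (hu₂ : u₂ ≠ 0) :
    3 * u₁ ^ 2 + 1 ≠ 0 := by
  have := σ.injective.ne hu₂
  rw [map_zero, hσ₂, div_ne_zero_iff] at this
  exact this.1

theorem apply_apply_u₂ (hσ₁ : σ u₁ = -u₁) (hσ₂ : σ u₂ = (3 * u₁ ^ 2 + 1) / u₂) (hu₂ : u₂ ≠ 0) :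
    σ (σ u₂) = u₂ := by
  have := three_mul_sq_add_one_ne_zero hσ₂ hu₂
  rw [hσ₂, map_div₀, map_add, map_mul, map_pow, hσ₁, hσ₂, map_one, map_ofNat]
  field_simp

theorem apply_apply_u₃ {ε : K} (hε : ε = 1 ∨ ε = -1) (hσ₃ : σ u₃ = algebraMap K F ε * u₃) :
    σ (σ u₃) = u₃ := by
  rw [hσ₃, map_mul, AlgEquiv.commutes, hσ₃, ← mul_assoc, ← map_mul]
  rcases hε with rfl | rfl <;> simp

theorem mul_self_eq_one (hgen : ∀ L : IntermediateField K F, u₁ ∈ L → u₂ ∈ L → u₃ ∈ L → L = ⊤)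
    {ε : K} (hε : ε = 1 ∨ ε = -1) (hσ₁ : σ u₁ = -u₁) (hσ₂ : σ u₂ = (3 * u₁ ^ 2 + 1) / u₂)
    (hσ₃ : σ u₃ = algebraMap K F ε * u₃) (hu₂ : u₂ ≠ 0) : σ * σ = 1 :=
  eq_one_of_fixedField_zpowers_eq_top <| hgen _
    ((mem_fixedField_zpowers_iff _ _).2 (by simp [hσ₁]))
    ((mem_fixedField_zpowers_iff _ _).2 (apply_apply_u₂ hσ₁ hσ₂ hu₂))
    ((mem_fixedField_zpowers_iff _ _).2 (apply_apply_u₃ hε hσ₃))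

theorem q₁_eq_add_apply (hσ₂ : σ u₂ = (3 * u₁ ^ 2 + 1) / u₂) (hu₂ : u₂ ≠ 0) :
    q₁ u₁ u₂ = u₂ + σ u₂ := by
  rw [hσ₂, q₁]
  field_simp
  ring

theorem q₂_eq_sub_apply_div (hσ₂ : σ u₂ = (3 * u₁ ^ 2 + 1) / u₂) (hu₁ : u₁ ≠ 0) (hu₂ : u₂ ≠ 0) :
    q₂ u₁ u₂ = (u₂ - σ u₂) / u₁ := by
  rw [hσ₂, q₂]
  field_simp
  ring

theorem apply_q₁ (hσ₁ : σ u₁ = -u₁) (hσ₂ : σ u₂ = (3 * u₁ ^ 2 + 1) / u₂) (hu₂ : u₂ ≠ 0) :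
    σ (q₁ u₁ u₂) = q₁ u₁ u₂ := by
  rw [q₁_eq_add_apply hσ₂ hu₂, map_add, apply_apply_u₂ hσ₁ hσ₂ hu₂, add_comm]

theorem apply_q₂ (hσ₁ : σ u₁ = -u₁) (hσ₂ : σ u₂ = (3 * u₁ ^ 2 + 1) / u₂) (hu₁ : u₁ ≠ 0)
    (hu₂ : u₂ ≠ 0) : σ (q₂ u₁ u₂) = q₂ u₁ u₂ := by
  rw [q₂_eq_sub_apply_div hσ₂ hu₁ hu₂, map_div₀, map_sub, apply_apply_u₂ hσ₁ hσ₂ hu₂, hσ₁,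
    div_neg, ← neg_div, neg_sub]

theorem apply_q₃ {ε : K} (hε : ε = 1 ∨ ε = -1) (hσ₁ : σ u₁ = -u₁)
    (hσ₃ : σ u₃ = algebraMap K F ε * u₃) : σ (q₃ ε u₁ u₃) = q₃ ε u₁ u₃ := by
  unfold q₃
  split_ifs with h
  · rw [hσ₃, h, map_one, one_mul]
  · rw [hε.resolve_left h] at hσ₃
    rw [map_div₀, hσ₁, hσ₃, map_neg, map_one, neg_one_mul, neg_div_neg_eq]

end Invariants

open Invariants in
open Classical in
theorem fixed_field_lemqq (K F : Type*) [Field K] [Field F]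
    [Algebra K F] [Algebra (MvPolynomial (Fin 3) K) F]
    [IsScalarTower K (MvPolynomial (Fin 3) K) F]
    [IsFractionRing (MvPolynomial (Fin 3) K) F]
    (h2 : (2 : K) ≠ 0) (ε : K) (hε : ε = 1 ∨ ε = -1)
    (u₁ u₂ u₃ : F)
    (hu₁ : u₁ = algebraMap (MvPolynomial (Fin 3) K) F (X 0))
    (hu₂ : u₂ = algebraMap (MvPolynomial (Fin 3) K) F (X 1))
    (hu₃ : u₃ = algebraMap (MvPolynomial (Fin 3) K) F (X 2))
    (σ : F ≃ₐ[K] F)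
    (hσ₁ : σ u₁ = -u₁)
    (hσ₂ : σ u₂ = (3 * u₁ ^ 2 + 1) / u₂)
    (hσ₃ : σ u₃ = algebraMap K F ε * u₃) :
    fixedField (Subgroup.zpowers σ) =
      adjoin K {(3 * u₁ ^ 2 + u₂ ^ 2 + 1) / u₂,
                -((3 * u₁ ^ 2 - u₂ ^ 2 + 1) / (u₁ * u₂)),
                if ε = 1 then u₃ else u₃ / u₁} := by
  have hgen (L : IntermediateField K F) (h₁ : u₁ ∈ L) (h₂ : u₂ ∈ L) (h₃ : u₃ ∈ L) : L = ⊤ :=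
    L.eq_top_of_algebraMap_X_mem (ι := Fin 3) fun i ↦ by fin_cases i <;> simpa [← hu₁, ← hu₂, ← hu₃]
  have h2F : (2 : F) ≠ 0 := by rwa [← map_ofNat (algebraMap K F), map_ne_zero]
  have hu₁0 : u₁ ≠ 0 := hu₁ ▸ algebraMap_X_ne_zero 0
  have hu₂0 : u₂ ≠ 0 := hu₂ ▸ algebraMap_X_ne_zero 1
  have hq₂12 : q₂ u₁ u₂ ^ 2 + 12 ≠ 0 := hu₁ ▸ hu₂ ▸ q₂_sq_add_twelve_ne_zero_of_isFractionRing 0 1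
  have hσ : orderOf σ = 2 := orderOf_eq_two_of_apply_eq_neg
    (mul_self_eq_one hgen hε hσ₁ hσ₂ hσ₃ hu₂0) h2F hu₁0 hσ₁
  change _ = adjoin K {q₁ u₁ u₂, q₂ u₁ u₂, q₃ ε u₁ u₃}
  set E := adjoin K {q₁ u₁ u₂, q₂ u₁ u₂, q₃ ε u₁ u₃}
  have hq₁ : q₁ u₁ u₂ ∈ E := subset_adjoin K _ (by simp)
  have hq₂ : q₂ u₁ u₂ ∈ E := subset_adjoin K _ (by simp)
  have hq₃ : q₃ ε u₁ u₃ ∈ E := subset_adjoin K _ (by simp)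
  refine fixedField_zpowers_eq_of_sq_mem hσ ?_ (sq_mem_of_q₁_q₂_mem hu₁0 hu₂0 hq₂12 hq₁ hq₂)
    (adjoin_simple_u₁_eq_top h2F hu₁0 hu₂0 hgen hq₁ hq₂ hq₃)
  rw [adjoin_le_iff]
  rintro y (rfl | rfl | rfl) <;> rw [SetLike.mem_coe, mem_fixedField_zpowers_iff]
  exacts [apply_q₁ hσ₁ hσ₂ hu₂0, apply_q₂ hσ₁ hσ₂ hu₁0 hu₂0, apply_q₃ hε hσ₁ hσ₃]
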